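/- Regret bound for weighted-average aggregation of CRPS: with weights w_{i,1} = 1/N updated by w_{i,t+1} = w_{i,t} e^{-(1/(2(b-a))) CRPS(F_{i,t}, y_t)} and learner forecast F_t(u) = Σ_i w*_{i,t} F_{i,t}(u), for every T: Σ_{t=1}^T CRPS(F_t,y_t) ≤ min_{1≤i≤N} Σ_{t=1}^T CRPS(F_{i,t},y_t) + 2(b-a) ln N. -/

import Mathlib

open MeasureTheory Finset

/-- Heaviside function: 0 for x < 0 and 1 for x ≥ 0. -/
noncomputable def Heav (x : ℝ) : ℝ := if x < 0 then 0 else 1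

/-- Continuous Ranked Probability Score on the interval [a,b]. -/
noncomputable def CRPS (a b : ℝ) (F : ℝ → ℝ) (y : ℝ) : ℝ :=
  ∫ u in a..b, (F u - Heav (u - y)) ^ 2

/-- A probability distribution function on [a,b]: nondecreasing, right-continuous,
with values in [0,1], F(a)=0 and F(b)=1. -/
def IsPDF (a b : ℝ) (F : ℝ → ℝ) : Prop :=
  MonotoneOn F (Set.Icc a b) ∧ (∀ x ∈ Set.Icc a b, F x ∈ Set.Icc (0:ℝ) 1) ∧
  F a = 0 ∧ F b = 1 ∧ ∀ x ∈ Set.Ico a b, ContinuousWithinAt F (Set.Ici x) x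

/-!
With `η = 1 / (2 (b - a))`, the map `g ↦ exp (-η ∫ g²)` is concave on functions bounded by one on
`[a, b]`: along a segment the integral is a quadratic `q s = A + 2 B s + C s²`, and Cauchy–Schwarz
together with `∫ g² ≤ b - a` gives `η q'² ≤ q''`. As `|F - H(· - y)| ≤ 1` for a distribution
function `F`, Jensen's inequality yields the mixability of CRPS,
`∑ pᵢ exp (-η CRPS(Fᵢ, y)) ≤ exp (-η CRPS(∑ pᵢ Fᵢ, y))`.
Hence the total weight `W_t = ∑ᵢ w_{i,t}` satisfies `W_{t+1} ≤ W_t exp (-η CRPS(F_t, y_t))`, so with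
`Lᵢ` and `L` the cumulative losses of expert `i` and of the learner,
`exp (-η Lᵢ) / N = w_{i,T} ≤ W_T ≤ exp (-η L)`; taking logarithms gives the bound.
-/

open Real Set

lemma concaveOn_exp_neg_quadratic {D : Set ℝ} (hD : Convex ℝ D) {η A B C : ℝ} (hη : 0 ≤ η)
    (h : ∀ s ∈ D, η * (2 * B + 2 * C * s) ^ 2 ≤ 2 * C) :
    ConcaveOn ℝ D fun s => exp (-η * (A + 2 * B * s + C * s ^ 2)) := by
  have hq : ∀ s, HasDerivAt (fun s => -η * (A + 2 * B * s + C * s ^ 2))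
      (-η * (2 * B + 2 * C * s)) s := fun s => by
    refine (((((hasDerivAt_id' s).const_mul (2 * B)).const_add A).fun_add
      ((hasDerivAt_pow 2 s).const_mul C)).const_mul (-η)).congr_deriv ?_
    push_cast; ring
  have hq' : ∀ s, HasDerivAt (fun s => -η * (2 * B + 2 * C * s)) (-η * (2 * C)) s := fun s => by
    simpa using (((hasDerivAt_id' s).const_mul (2 * C)).const_add (2 * B)).const_mul (-η)
  refine concaveOn_of_hasDerivWithinAt2_nonpos hD (by fun_prop)
    (fun s _ => ((hq s).exp).hasDerivWithinAt)
    (fun s _ => (((hq s).exp).mul (hq' s)).hasDerivWithinAt) fun s hs => ?_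
  have hs := h s (interior_subset hs)
  have hE := exp_pos (-η * (A + 2 * B * s + C * s ^ 2))
  nlinarith [mul_nonneg (mul_nonneg hE.le hη) (sub_nonneg.2 hs)]

section UnitBall

variable {α : Type*} [MeasurableSpace α] (μ : Measure α)

def aeUnitBall : Set (α → ℝ) :=
  {g | AEStronglyMeasurable g μ ∧ ∀ᵐ u ∂μ, |g u| ≤ 1}

variable {μ}

lemma convex_aeUnitBall : Convex ℝ (aeUnitBall μ) := by
  intro g hg h hh θ ρ hθ hρ hθρ
  refine ⟨(hg.1.const_smul θ).add (hh.1.const_smul ρ), ?_⟩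
  filter_upwards [hg.2, hh.2] with u hgu hhu
  calc |θ * g u + ρ * h u| ≤ θ * |g u| + ρ * |h u| := by
        simpa [abs_mul, abs_of_nonneg hθ, abs_of_nonneg hρ] using abs_add_le (θ * g u) (ρ * h u)
    _ ≤ θ * 1 + ρ * 1 := by gcongr
    _ = 1 := by rw [mul_one, mul_one, hθρ]

lemma memLp_two_of_mem_aeUnitBall [IsFiniteMeasure μ] {g : α → ℝ} (hg : g ∈ aeUnitBall μ) :
    MemLp g 2 μ :=
  MemLp.of_bound hg.1 1 (by simpa only [Real.norm_eq_abs] using hg.2)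

lemma integral_sq_le_of_mem_aeUnitBall [IsFiniteMeasure μ] {g : α → ℝ}
    (hg : g ∈ aeUnitBall μ) : ∫ u, g u ^ 2 ∂μ ≤ μ.real univ := by
  have hbound : ∀ᵐ u ∂μ, ‖g u ^ 2‖ ≤ 1 := by
    filter_upwards [hg.2] with u hu
    rw [norm_pow, Real.norm_eq_abs]
    exact pow_le_one₀ (abs_nonneg _) hu
  simpa using (le_abs_self _).trans (norm_integral_le_of_norm_le_const hbound)

lemma sq_integral_mul_le {f g : α → ℝ} (hf : MemLp f 2 μ) (hg : MemLp g 2 μ) :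
    (∫ u, f u * g u ∂μ) ^ 2 ≤ (∫ u, f u ^ 2 ∂μ) * ∫ u, g u ^ 2 ∂μ := by
  have hinner : ∀ {f g : α → ℝ} (hf : MemLp f 2 μ) (hg : MemLp g 2 μ),
      inner ℝ (hf.toLp f) (hg.toLp g) = ∫ u, f u * g u ∂μ := by
    intro f g hf hg
    rw [L2.inner_def]
    refine integral_congr_ae ?_
    filter_upwards [hf.coeFn_toLp, hg.coeFn_toLp] with u hfu hgu
    simp [hfu, hgu, mul_comm]
  simpa only [hinner, ← sq] using real_inner_mul_inner_self_le (hf.toLp f) (hg.toLp g)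

lemma concaveOn_exp_neg_integral_sq [IsFiniteMeasure μ] {η : ℝ} (hη : 0 ≤ η)
    (hμ : 2 * η * μ.real univ ≤ 1) :
    ConcaveOn ℝ (aeUnitBall μ) fun g => exp (-η * ∫ u, g u ^ 2 ∂μ) := by
  refine ⟨convex_aeUnitBall, fun g₁ hg₁ g₀ hg₀ θ ρ hθ hρ hθρ => ?_⟩
  set d := g₁ - g₀
  have h₀ := memLp_two_of_mem_aeUnitBall hg₀
  have hd : MemLp d 2 μ := (memLp_two_of_mem_aeUnitBall hg₁).sub h₀
  set A := ∫ u, g₀ u ^ 2 ∂μ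
  set B := ∫ u, g₀ u * d u ∂μ
  set C := ∫ u, d u ^ 2 ∂μ
  have hg₀d : Integrable (fun u => g₀ u * d u) μ := h₀.integrable_mul hd
  have hlin : ∀ s : ℝ, ∫ u, (g₀ + s • d) u * d u ∂μ = B + C * s := fun s => by
    simp only [Pi.add_apply, Pi.smul_apply, smul_eq_mul, add_mul, mul_assoc, ← sq]
    rw [integral_add hg₀d (hd.integrable_sq.const_mul s), integral_const_mul]
    ring
  have hquad : ∀ s : ℝ, ∫ u, (g₀ + s • d) u ^ 2 ∂μ = A + 2 * B * s + C * s ^ 2 := fun s => by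
    have hexp : ∀ u, (g₀ + s • d) u ^ 2 = g₀ u ^ 2 + 2 * s * (g₀ u * d u) + s ^ 2 * d u ^ 2 :=
      fun u => by simp only [Pi.add_apply, Pi.smul_apply, smul_eq_mul]; ring
    simp only [hexp]
    have hI : Integrable (fun u => g₀ u ^ 2 + 2 * s * (g₀ u * d u)) μ :=
      h₀.integrable_sq.add (hg₀d.const_mul _)
    rw [integral_add hI (hd.integrable_sq.const_mul _),
      integral_add h₀.integrable_sq (hg₀d.const_mul _),
      integral_const_mul, integral_const_mul]
    ring
  have hcond : ∀ s ∈ Icc (0 : ℝ) 1, η * (2 * B + 2 * C * s) ^ 2 ≤ 2 * C := by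
    intro s hs
    have hs_mem : g₀ + s • d ∈ aeUnitBall μ := convex_aeUnitBall.add_smul_sub_mem hg₀ hg₁ hs
    have hCS := sq_integral_mul_le (memLp_two_of_mem_aeUnitBall hs_mem) hd
    rw [hlin] at hCS
    have hC : 0 ≤ C := integral_nonneg fun u => sq_nonneg _
    calc η * (2 * B + 2 * C * s) ^ 2 = 4 * η * (B + C * s) ^ 2 := by ring
      _ ≤ 4 * η * (μ.real univ * C) := by
        gcongr
        exact hCS.trans (mul_le_mul_of_nonneg_right (integral_sq_le_of_mem_aeUnitBall hs_mem) hC)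
      _ = 2 * (2 * η * μ.real univ) * C := by ring
      _ ≤ 2 * 1 * C := by gcongr
      _ = 2 * C := by ring
  have hφ : ConcaveOn ℝ (Icc 0 1) fun s : ℝ => exp (-η * ∫ u, (g₀ + s • d) u ^ 2 ∂μ) :=
    (concaveOn_exp_neg_quadratic (convex_Icc 0 1) hη hcond).congr fun s _ => by rw [hquad]
  obtain rfl : ρ = 1 - θ := by linarith
  have hmid : ∀ u, g₀ u + θ * (g₁ u - g₀ u) = θ * g₁ u + (1 - θ) * g₀ u := fun u => by ring
  simpa [d, hmid] using hφ.2 (right_mem_Icc.2 zero_le_one) (left_mem_Icc.2 zero_le_one) hθ hρ hθρ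

end UnitBall

section ExpWeights

variable {ι : Type*} {η : ℝ} {ℓ : ι → ℕ → ℝ} {w : ℕ → ι → ℝ}

lemma exp_weights_eq (hwt : ∀ t i, w (t + 1) i = w t i * exp (-η * ℓ i t)) (T : ℕ) (i : ι) :
    w T i = w 0 i * exp (-η * ∑ t ∈ range T, ℓ i t) := by
  induction T with
  | zero => simp
  | succ T ih => rw [hwt, ih, sum_range_succ, mul_assoc, ← exp_add]; ring_nf

lemma exp_weights_pos (hwt : ∀ t i, w (t + 1) i = w t i * exp (-η * ℓ i t)) {i : ι}
    (hi : 0 < w 0 i) (T : ℕ) : 0 < w T i := by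
  rw [exp_weights_eq hwt]
  positivity

theorem sum_le_sum_add_log_div_of_exp_weights [Fintype ι] (hη : 0 < η) {L : ℕ → ℝ}
    (hw0 : ∀ j, 0 < w 0 j) (hwt : ∀ t i, w (t + 1) i = w t i * exp (-η * ℓ i t))
    (hL : ∀ t, ∑ j, (w t j / ∑ k, w t k) * exp (-η * ℓ j t) ≤ exp (-η * L t))
    (T : ℕ) (i : ι) :
    ∑ t ∈ range T, L t ≤ ∑ t ∈ range T, ℓ i t + log ((∑ j, w 0 j) / w 0 i) / η := by
  have hpos : ∀ t j, 0 < w t j := fun t j => exp_weights_pos hwt (hw0 j) t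
  have hW : ∀ t, 0 < ∑ j, w t j := fun t => sum_pos (fun j _ => hpos t j) ⟨i, mem_univ i⟩
  have hstep : ∀ t, ∑ j, w (t + 1) j ≤ (∑ j, w t j) * exp (-η * L t) := fun t =>
    calc ∑ j, w (t + 1) j = (∑ j, w t j) * ∑ j, (w t j / ∑ k, w t k) * exp (-η * ℓ j t) := by
          simp only [hwt, mul_sum]
          exact sum_congr rfl fun j _ => by field_simp [(hW t).ne']
      _ ≤ (∑ j, w t j) * exp (-η * L t) := mul_le_mul_of_nonneg_left (hL t) (hW t).le
  have hpot : ∀ T, ∑ j, w T j ≤ (∑ j, w 0 j) * exp (-η * ∑ t ∈ range T, L t) := by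
    intro T
    induction T with
    | zero => simp
    | succ T ih =>
      calc ∑ j, w (T + 1) j ≤ (∑ j, w T j) * exp (-η * L T) := hstep T
        _ ≤ (∑ j, w 0 j) * exp (-η * ∑ t ∈ range T, L t) * exp (-η * L T) := by gcongr
        _ = (∑ j, w 0 j) * exp (-η * ∑ t ∈ range (T + 1), L t) := by
          rw [mul_assoc, ← exp_add, sum_range_succ]; ring_nf
  have hi : w 0 i * exp (-η * ∑ t ∈ range T, ℓ i t) ≤
      (∑ j, w 0 j) * exp (-η * ∑ t ∈ range T, L t) :=
    exp_weights_eq hwt T i ▸ (single_le_sum (fun j _ => (hpos T j).le) (mem_univ i)).trans (hpot T)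
  have hlog := log_le_log (mul_pos (hw0 i) (exp_pos _)) hi
  rw [log_mul (hw0 i).ne' (exp_pos _).ne', log_mul (hW 0).ne' (exp_pos _).ne', log_exp,
    log_exp] at hlog
  rw [log_div (hW 0).ne' (hw0 i).ne', ← sub_le_iff_le_add', le_div_iff₀ hη]
  linarith

end ExpWeights

lemma measurable_heav : Measurable Heav :=
  Measurable.ite measurableSet_Iio measurable_const measurable_const

lemma heav_mem_Icc (x : ℝ) : Heav x ∈ Icc (0 : ℝ) 1 := by
  unfold Heav; split_ifs <;> norm_num

lemma CRPS_eq_integral {a b : ℝ} (hab : a ≤ b) (F : ℝ → ℝ) (y : ℝ) :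
    CRPS a b F y = ∫ u, (F u - Heav (u - y)) ^ 2 ∂volume.restrict (Ioc a b) :=
  intervalIntegral.integral_of_le hab

lemma IsPDF.sub_heav_mem_aeUnitBall {a b : ℝ} (hab : a ≤ b) {G : ℝ → ℝ} (hG : IsPDF a b G)
    (y : ℝ) : (fun u => G u - Heav (u - y)) ∈ aeUnitBall (volume.restrict (Ioc a b)) := by
  have hmono : MonotoneOn G (uIcc a b) := uIcc_of_le hab ▸ hG.1
  refine ⟨hmono.intervalIntegrable.1.aestronglyMeasurable.sub
    (measurable_heav.comp (measurable_id.sub_const y)).aestronglyMeasurable, ?_⟩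
  refine (ae_restrict_iff' measurableSet_Ioc).2 (ae_of_all _ fun u hu => ?_)
  have hGu := hG.2.1 u (Ioc_subset_Icc_self hu)
  have hH := heav_mem_Icc (u - y)
  exact abs_sub_le_iff.2 ⟨by linarith [hGu.2, hH.1], by linarith [hGu.1, hH.2]⟩

theorem sum_mul_exp_neg_CRPS_le {a b : ℝ} (hab : a < b) {ι : Type*} (s : Finset ι)
    {G : ι → ℝ → ℝ} (hG : ∀ i ∈ s, IsPDF a b (G i)) (y : ℝ) {p : ι → ℝ}
    (hp : ∀ i ∈ s, 0 ≤ p i) (hp1 : ∑ i ∈ s, p i = 1) :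
    ∑ i ∈ s, p i * exp (-(1 / (2 * (b - a))) * CRPS a b (G i) y) ≤
      exp (-(1 / (2 * (b - a))) * CRPS a b (fun u => ∑ i ∈ s, p i * G i u) y) := by
  have hba : 0 < b - a := sub_pos.2 hab
  have hμ : 2 * (1 / (2 * (b - a))) * (volume.restrict (Ioc a b)).real univ ≤ 1 := by
    rw [measureReal_restrict_apply_univ, Real.volume_real_Ioc_of_le hab.le]
    exact (by field_simp : 2 * (1 / (2 * (b - a))) * (b - a) = 1).le
  have hmix : (fun u => ∑ i ∈ s, p i * G i u - Heav (u - y)) =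
      ∑ i ∈ s, p i • fun u => G i u - Heav (u - y) := by
    ext u
    simp only [Finset.sum_apply, Pi.smul_apply, smul_eq_mul, mul_sub, sum_sub_distrib,
      ← sum_mul, hp1, one_mul]
  have := (concaveOn_exp_neg_integral_sq (by positivity) hμ).le_map_sum hp hp1
    fun i hi => (hG i hi).sub_heav_mem_aeUnitBall hab.le y
  rw [← hmix] at this
  simpa only [CRPS_eq_integral hab.le, smul_eq_mul] using this

theorem crps_wa_regret_general (a b : ℝ) (hab : a < b) (N : ℕ)
    (F : Fin N → ℕ → ℝ → ℝ) (hF : ∀ i t, IsPDF a b (F i t))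
    (y : ℕ → ℝ)
    (w : ℕ → Fin N → ℝ)
    (hw0 : ∀ i, w 0 i = 1 / N)
    (hwt : ∀ t i, w (t + 1) i = w t i *
      Real.exp (-(1 / (2 * (b - a))) * CRPS a b (F i t) (y t)))
    (Fl : ℕ → ℝ → ℝ)
    (hFl : ∀ t u, Fl t u = ∑ i, (w t i / ∑ j, w t j) * F i t u) :
    ∀ (T : ℕ) (i : Fin N),
      ∑ t ∈ Finset.range T, CRPS a b (Fl t) (y t) ≤
        ∑ t ∈ Finset.range T, CRPS a b (F i t) (y t) +
          2 * (b - a) * Real.log N := by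
  intro T i
  have hN : (0 : ℝ) < N := Nat.cast_pos.2 i.pos
  have hw0_pos : ∀ j, 0 < w 0 j := fun j => by rw [hw0]; positivity
  have hmix : ∀ t, ∑ j, (w t j / ∑ k, w t k) * exp (-(1 / (2 * (b - a))) * CRPS a b (F j t) (y t))
      ≤ exp (-(1 / (2 * (b - a))) * CRPS a b (Fl t) (y t)) := fun t => by
    have hW : 0 < ∑ k, w t k :=
      sum_pos (fun j _ => exp_weights_pos hwt (hw0_pos j) t) ⟨i, mem_univ i⟩
    rw [show Fl t = _ from funext (hFl t)]
    exact sum_mul_exp_neg_CRPS_le hab _ (fun j _ => hF j t) (y t)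
      (fun j _ => (div_pos (exp_weights_pos hwt (hw0_pos j) t) hW).le)
      (by rw [← sum_div, div_self hW.ne'])
  have hη : 0 < 1 / (2 * (b - a)) := by have := sub_pos.2 hab; positivity
  have hregret := sum_le_sum_add_log_div_of_exp_weights hη hw0_pos hwt hmix T i
  have hratio : (∑ j, w 0 j) / w 0 i = N := by simp [hw0]
  rwa [hratio, div_div_eq_mul_div, div_one, mul_comm] at hregret

/-- Regret bound for weighted-average (WA) aggregation of CRPS: the learner's
cumulative CRPS is at most every expert's cumulative CRPS plus 2(b-a) ln N. -/
theorem crps_wa_regret (a b : ℝ) (hab : a < b) (N : ℕ) (hN : 0 < N)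
    (F : Fin N → ℕ → ℝ → ℝ) (hF : ∀ i t, IsPDF a b (F i t))
    (y : ℕ → ℝ) (hy : ∀ t, y t ∈ Set.Icc a b)
    (w : ℕ → Fin N → ℝ)
    (hw0 : ∀ i, w 0 i = 1 / N)
    (hwt : ∀ t i, w (t + 1) i = w t i *
      Real.exp (-(1 / (2 * (b - a))) * CRPS a b (F i t) (y t)))
    (Fl : ℕ → ℝ → ℝ)
    (hFl : ∀ t u, Fl t u = ∑ i, (w t i / ∑ j, w t j) * F i t u) :
    ∀ (T : ℕ) (i : Fin N),
      ∑ t ∈ Finset.range T, CRPS a b (Fl t) (y t) ≤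
        ∑ t ∈ Finset.range T, CRPS a b (F i t) (y t) +
          2 * (b - a) * Real.log N :=
  crps_wa_regret_general a b hab N F hF y w hw0 hwt Fl hFl
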